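/- Define s′ : S₃ → (ℤ/4ℤ)³ (indexing triples by {0,1,2}) by s′(id) = (0,0,0), s′((0 1 2)) = (3,3,2), s′((0 2 1)) = (2,1,1) on even permutations, and s′((0 1)) = (1,3,2), s′((1 2)) = (2,1,3), s′((0 2)) = (0,2,0) on transpositions. Then s′ is a 1-cocycle for the right permutation action of S₃ on (ℤ/4ℤ)³: for all η, θ ∈ S₃ and all i ∈ {0,1,2}, s′(η∘θ)(i) = s′(η)(θ(i)) + s′(θ)(i); equivalently η ↦ (η, s′(η)) is a group homomorphism into the semidirect product S₃ ⋉ (ℤ/4ℤ)³. -/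

import Mathlib

/-!
Writing `c = (0, 3, 2)`, one checks on the six permutations that
`s′(η)(i) = c(η i) - c(i) + (1 - sgn η)`, i.e. `s′` is the sign cocycle `η ↦ 2·[η odd]`
shifted by the coboundary of `c`. Coboundaries are cocycles by telescoping, and the sign
part is a cocycle because `1 - uv ≡ (1 - u) + (1 - v) mod 4` for `u, v = ±1`.
-/

open Equiv

def IsPermCocycle {α G : Type*} [AddCommGroup G] (s : Perm α → α → G) : Prop :=
  ∀ η θ : Perm α, ∀ i : α, s (η * θ) i = s η (θ i) + s θ i

namespace IsPermCocycle

variable {α G : Type*} [AddCommGroup G]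

theorem add {s t : Perm α → α → G} (hs : IsPermCocycle s) (ht : IsPermCocycle t) :
    IsPermCocycle (s + t) := by
  intro η θ i
  simp only [Pi.add_apply, hs η θ i, ht η θ i]
  abel

theorem coboundary (c : α → G) : IsPermCocycle fun η i => c (η i) - c i := by
  intro η θ i
  simp only [Perm.mul_apply]
  abel

theorem one_sub_sign [DecidableEq α] [Fintype α] :
    IsPermCocycle fun (η : Perm α) _ => ((1 - Perm.sign η : ℤ) : ZMod 4) := by
  intro η θ _
  dsimp only
  rw [Perm.sign_mul, Units.val_mul]
  rcases Int.units_eq_one_or (Perm.sign η) with h | h <;>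
    rcases Int.units_eq_one_or (Perm.sign θ) with h' | h' <;>
    simp only [h, h'] <;> decide

end IsPermCocycle

theorem perm_fin_three_cases (g : Perm (Fin 3)) :
    g = 1 ∨ g = swap 0 1 * swap 1 2 ∨ g = swap 1 2 * swap 0 1 ∨
      g = swap 0 1 ∨ g = swap 1 2 ∨ g = swap 0 2 := by
  revert g
  decide

/-- The alternative map `s′ : S₃ → (ℤ/4ℤ)³` (same values on even permutations as `s`,
redefined values on transpositions) is also a 1-cocycle for the right permutation
action of `S₃` on `(ℤ/4ℤ)³`: `s′(η∘θ)(i) = s′(η)(θ(i)) + s′(θ)(i)`.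
Here `(η * θ) i = η (θ i)`, the cycle `(0 1 2)` is `Equiv.swap 0 1 * Equiv.swap 1 2`,
and `(0 2 1)` is `Equiv.swap 1 2 * Equiv.swap 0 1`. -/
theorem stmt1 (s' : Equiv.Perm (Fin 3) → Fin 3 → ZMod 4)
    (h_id : s' 1 = ![0, 0, 0])
    (h_012 : s' (Equiv.swap 0 1 * Equiv.swap 1 2) = ![3, 3, 2])
    (h_021 : s' (Equiv.swap 1 2 * Equiv.swap 0 1) = ![2, 1, 1])
    (h_01 : s' (Equiv.swap 0 1) = ![1, 3, 2])
    (h_12 : s' (Equiv.swap 1 2) = ![2, 1, 3])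
    (h_02 : s' (Equiv.swap 0 2) = ![0, 2, 0]) :
    ∀ η θ : Equiv.Perm (Fin 3), ∀ i : Fin 3,
      s' (η * θ) i = s' η (θ i) + s' θ i := by
  let c : Fin 3 → ZMod 4 := ![0, 3, 2]
  have hs' :
      s' = (fun η i => c (η i) - c i) + fun η _ => ((1 - Perm.sign η : ℤ) : ZMod 4) := by
    funext g
    rcases perm_fin_three_cases g with rfl | rfl | rfl | rfl | rfl | rfl
    · rw [h_id]; decide
    · rw [h_012]; decide
    · rw [h_021]; decide
    · rw [h_01]; decide
    · rw [h_12]; decide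
    · rw [h_02]; decide
  rw [hs']
  exact (IsPermCocycle.coboundary c).add IsPermCocycle.one_sub_sign
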